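/- arXiv:2311.12335 — 2 statements merged into one kernel-verified Lean document; each statement's English description precedes it below -/
import Mathlib

section
/- Let δ ≥ 2 and s be integers with δ + 1 ≤ s ≤ (n−1)/2 and n ≥ 8δ. Then λ₁(D(K_δ ∨ (K_{n−2δ} + δK₁))) < λ₁(D(K_s ∨ (K_{n−2s} + sK₁))). -/
open SimpleGraph Finset

/-- The distance matrix of a graph: the `(i,j)` entry is the graph distance from `i` to `j`. -/
noncomputable def distMatrix {V : Type*} [Fintype V] (G : SimpleGraph V) : Matrix V V ℝ :=
  fun i j => (G.dist i j : ℝ)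

/-- The distance spectral radius `λ₁(D(G))`: the largest eigenvalue of the distance matrix. -/
noncomputable def distSpecRad {V : Type*} [Fintype V] (G : SimpleGraph V) : ℝ :=
  sSup {μ : ℝ | ∃ v : V → ℝ, v ≠ 0 ∧ (distMatrix G).mulVec v = μ • v}

/-- The join `G ∨ H` of two graphs: all edges between the parts are added. -/
def graphJoin {α β : Type*} (G : SimpleGraph α) (H : SimpleGraph β) :
    SimpleGraph (α ⊕ β) where
  Adj x y :=
    match x, y with
    | Sum.inl a, Sum.inl a' => G.Adj a a'
    | Sum.inr b, Sum.inr b' => H.Adj b b'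
    | Sum.inl _, Sum.inr _ => True
    | Sum.inr _, Sum.inl _ => True
  symm := ⟨by rintro (a | a) (b | b) h <;> first | exact G.adj_symm h | exact H.adj_symm h | trivial⟩
  loopless := ⟨by rintro (a | a) h <;> first | exact G.irrefl h | exact H.irrefl h⟩

/-- The disjoint union `G + H` of two graphs. -/
def graphSum {α β : Type*} (G : SimpleGraph α) (H : SimpleGraph β) :
    SimpleGraph (α ⊕ β) where
  Adj x y :=
    match x, y with
    | Sum.inl a, Sum.inl a' => G.Adj a a'
    | Sum.inr b, Sum.inr b' => H.Adj b b'
    | _, _ => False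
  symm := ⟨by rintro (a | a) (b | b) h <;> first | exact G.adj_symm h | exact H.adj_symm h | exact h⟩
  loopless := ⟨by rintro (a | a) h <;> first | exact G.irrefl h | exact H.irrefl h⟩

/-- `m` pairwise disjoint copies of the complete graph `K_p`. -/
def repK (m p : ℕ) : SimpleGraph (Fin m × Fin p) where
  Adj x y := x.1 = y.1 ∧ x ≠ y
  symm := ⟨fun _ _ h => ⟨h.1.symm, h.2.symm⟩⟩
  loopless := ⟨fun _ h => h.2 rfl⟩

/-- The disjoint union of cliques `K_{m 0} + K_{m 1} + ⋯`. -/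
def cliquesGraph {c : ℕ} (m : Fin c → ℕ) : SimpleGraph (Σ i, Fin (m i)) where
  Adj x y := x.1 = y.1 ∧ x ≠ y
  symm := ⟨fun _ _ h => ⟨h.1.symm, h.2.symm⟩⟩
  loopless := ⟨fun _ h => h.2 rfl⟩

/-- `G` is `t`-tough: whenever deleting a vertex set `S` disconnects the graph,
`|S| ≥ t · c(G - S)`. -/
def IsTTough {V : Type*} [Fintype V] (t : ℝ) (G : SimpleGraph V) : Prop :=
  ∀ S : Finset V, ¬ (G.induce ((S : Set V)ᶜ)).Connected →
    t * Nat.card (G.induce ((S : Set V)ᶜ)).ConnectedComponent ≤ (S.card : ℝ)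

/-!
The graph `K_p ∨ (K_c + pK₁)` has diameter two, and its parts `K_p`, `K_c`, `pK₁` form an
equitable partition of the distance matrix with quotient
`Q = [[p-1, c, p], [p, c-1, 2p], [p, 2c, 2p-2]]`. A positive eigenvector of `Q` lifts to a positive
eigenvector of the distance matrix, and for a symmetric nonnegative matrix the eigenvalue of a
positive eigenvector dominates every eigenvalue. Hence the distance spectral radius is a root `t`
of `det (t - Q)` beyond the larger root of the `2 × 2` minor, and such a root exists by the
intermediate value theorem. With `N = 2p + c` fixed, `det (t - Q)` strictly decreases in `p`
once `t ≥ N + p - 2` and `8p ≤ N`; the root for `p = δ` lies in that range, so the cubic for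
`p = s` is still negative there and its root is larger.
-/

open Matrix

theorem SimpleGraph.dist_eq_two_of_mem_commonNeighbors {V : Type*} {G : SimpleGraph V}
    {u v w : V} (hne : u ≠ v) (hna : ¬G.Adj u v) (hw : w ∈ G.commonNeighbors u v) :
    G.dist u v = 2 := by
  simp [SimpleGraph.dist, edist_eq_two_iff.2 ⟨hne, hna, w, hw⟩]

theorem sum_ite_eq_zero_else_const {ι R : Type*} [Fintype ι] [DecidableEq ι] [Ring R] (i : ι)
    (k : R) : ∑ j, (if i = j then 0 else k) = (Fintype.card ι - 1 : R) * k := by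
  have h : ∀ j, (if i = j then 0 else k) = k - if i = j then k else 0 := fun j => by
    split_ifs <;> simp
  simp [h, sum_sub_distrib, sub_mul]

section graphJoin
variable {α β : Type*} (G : SimpleGraph α) (H : SimpleGraph β)

@[simp] theorem graphJoin_adj_inl_inl (a a' : α) :
    (graphJoin G H).Adj (.inl a) (.inl a') ↔ G.Adj a a' := Iff.rfl

@[simp] theorem graphJoin_adj_inr_inr (b b' : β) :
    (graphJoin G H).Adj (.inr b) (.inr b') ↔ H.Adj b b' := Iff.rfl

@[simp] theorem graphJoin_adj_inl_inr (a : α) (b : β) : (graphJoin G H).Adj (.inl a) (.inr b) :=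
  trivial

@[simp] theorem graphJoin_adj_inr_inl (a : α) (b : β) : (graphJoin G H).Adj (.inr b) (.inl a) :=
  trivial

@[simp] theorem graphSum_adj_inl_inl (a a' : α) :
    (graphSum G H).Adj (.inl a) (.inl a') ↔ G.Adj a a' := Iff.rfl

@[simp] theorem graphSum_adj_inr_inr (b b' : β) :
    (graphSum G H).Adj (.inr b) (.inr b') ↔ H.Adj b b' := Iff.rfl

@[simp] theorem graphSum_not_adj_inl_inr (a : α) (b : β) :
    ¬(graphSum G H).Adj (.inl a) (.inr b) := id

@[simp] theorem graphSum_not_adj_inr_inl (a : α) (b : β) :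
    ¬(graphSum G H).Adj (.inr b) (.inl a) := id

open Classical in
theorem distMatrix_graphJoin [Fintype α] [Fintype β] [Nonempty α] [Nonempty β]
    (u v : α ⊕ β) :
    distMatrix (graphJoin G H) u v =
      if u = v then 0 else if (graphJoin G H).Adj u v then 1 else 2 := by
  change ((graphJoin G H).dist u v : ℝ) = _
  split_ifs with huv hadj
  · simp [huv]
  · simp [dist_eq_one_iff_adj.2 hadj]
  · obtain ⟨a⟩ := ‹Nonempty α›
    obtain ⟨b⟩ := ‹Nonempty β›
    rcases u with u | u <;> rcases v with v | v
    · simp [dist_eq_two_of_mem_commonNeighbors huv hadj (w := .inr b)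
        (by simp [mem_commonNeighbors])]
    · exact absurd trivial hadj
    · exact absurd trivial hadj
    · simp [dist_eq_two_of_mem_commonNeighbors huv hadj (w := .inl a)
        (by simp [mem_commonNeighbors])]

end graphJoin

theorem Matrix.IsSymm.abs_le_of_pos_eigenvector {ι : Type*} [Fintype ι] {A : Matrix ι ι ℝ}
    (hA : A.IsSymm) (hA0 : ∀ i j, 0 ≤ A i j) {w v : ι → ℝ} {ρ μ : ℝ}
    (hw : ∀ i, 0 < w i) (hAw : A *ᵥ w = ρ • w) (hv : v ≠ 0) (hAv : A *ᵥ v = μ • v) :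
    |μ| ≤ ρ := by
  -- Pair `|μ| |v| ≤ A |v|` with `w`, which is also a left eigenvector as `A` is symmetric.
  set u : ι → ℝ := fun i => |v i|
  have hAu : |μ| • u ≤ A *ᵥ u := fun i => by
    calc |μ| * |v i| = |(A *ᵥ v) i| := by rw [hAv, Pi.smul_apply, smul_eq_mul, abs_mul]
      _ ≤ ∑ j, |A i j * v j| := abs_sum_le_sum_abs _ _
      _ = (A *ᵥ u) i := by simp [mulVec, dotProduct, u, abs_mul, abs_of_nonneg (hA0 i _)]
  have hwu : 0 < w ⬝ᵥ u := by
    obtain ⟨i, hi⟩ := Function.ne_iff.1 hv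
    exact sum_pos' (fun j _ => mul_nonneg (hw j).le (abs_nonneg _))
      ⟨i, mem_univ _, mul_pos (hw i) (abs_pos.2 hi)⟩
  refine le_of_mul_le_mul_right ?_ hwu
  calc |μ| * (w ⬝ᵥ u) = w ⬝ᵥ (|μ| • u) := by rw [dotProduct_smul, smul_eq_mul]
    _ ≤ w ⬝ᵥ (A *ᵥ u) := dotProduct_le_dotProduct_of_nonneg_left hAu fun i => (hw i).le
    _ = ρ * (w ⬝ᵥ u) := by
      rw [dotProduct_mulVec, ← mulVec_transpose, hA.eq, hAw, smul_dotProduct, smul_eq_mul]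

theorem distMatrix_isSymm {V : Type*} [Fintype V] (G : SimpleGraph V) : (distMatrix G).IsSymm :=
  IsSymm.ext fun i j => by simp [distMatrix, dist_comm]

theorem distSpecRad_eq_of_pos_eigenvector {V : Type*} [Fintype V] [Nonempty V]
    {G : SimpleGraph V} {w : V → ℝ} {ρ : ℝ} (hw : ∀ i, 0 < w i)
    (hGw : distMatrix G *ᵥ w = ρ • w) : distSpecRad G = ρ := by
  refine IsGreatest.csSup_eq
    ⟨⟨w, fun h => (hw (Classical.arbitrary V)).ne' (congrFun h _), hGw⟩, ?_⟩
  rintro μ ⟨v, hv, hGv⟩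
  exact (le_abs_self μ).trans <| (distMatrix_isSymm G).abs_le_of_pos_eigenvector
    (fun _ _ => Nat.cast_nonneg _) hw hGw hv hGv

abbrev cliqueJoin (p c : ℕ) : SimpleGraph (Fin p ⊕ (Fin c ⊕ Fin p)) :=
  graphJoin (⊤ : SimpleGraph (Fin p))
    (graphSum (⊤ : SimpleGraph (Fin c)) (⊥ : SimpleGraph (Fin p)))

namespace CliqueJoin

def part (p c : ℕ) : Fin p ⊕ (Fin c ⊕ Fin p) → Fin 3 :=
  Sum.elim (fun _ => 0) (Sum.elim (fun _ => 1) (fun _ => 2))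

noncomputable def quotient (p c : ℝ) : Matrix (Fin 3) (Fin 3) ℝ :=
  !![p - 1, c, p; p, c - 1, 2 * p; p, 2 * c, 2 * p - 2]

/- `cubic p c t = det (t - quotient p c)`, expanded along the first row; `minor p c t` is the
minor of its top-left entry. -/
noncomputable def minor (p c t : ℝ) : ℝ := (t - c + 1) * (t - 2 * p + 2) - 4 * c * p

noncomputable def cubic (p c t : ℝ) : ℝ :=
  (t - p + 1) * minor p c t - c * p * (t + 2) - p ^ 2 * (t + c + 1)

noncomputable def minorRoot (p c : ℝ) : ℝ :=
  (c + 2 * p - 3 + √((c - 2 * p + 1) ^ 2 + 16 * c * p)) / 2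

theorem distMatrix_mulVec_comp_part {p : ℕ} (hp : 0 < p) (c : ℕ) (v : Fin 3 → ℝ) :
    distMatrix (cliqueJoin p c) *ᵥ (v ∘ part p c) = (quotient p c *ᵥ v) ∘ part p c := by
  have : Nonempty (Fin p) := ⟨⟨0, hp⟩⟩
  ext (a | b | e) <;>
    simp +contextual [mulVec, dotProduct, Fintype.sum_sum_type, distMatrix_graphJoin,
      sum_ite_eq_zero_else_const, part, quotient, Fin.sum_univ_three] <;> ring

section
variable {p c : ℝ}

theorem minor_eq_mul (hp : 0 ≤ p) (hc : 0 ≤ c) (t : ℝ) :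
    minor p c t = (t - minorRoot p c) * (t - (c + 2 * p - 3 - minorRoot p c)) := by
  have := Real.sq_sqrt (by positivity : 0 ≤ (c - 2 * p + 1) ^ 2 + 16 * c * p)
  unfold minor minorRoot
  linear_combination (1 / 4 : ℝ) * this

theorem le_minorRoot (hp : 0 ≤ p) (hc : 0 ≤ c) :
    2 * p - 2 ≤ minorRoot p c ∧ c - 1 ≤ minorRoot p c := by
  have : |c - 2 * p + 1| ≤ √((c - 2 * p + 1) ^ 2 + 16 * c * p) := by
    rw [← Real.sqrt_sq_eq_abs]
    exact Real.sqrt_le_sqrt (by nlinarith [mul_nonneg hc hp])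
  unfold minorRoot
  constructor <;> linarith [le_abs_self (c - 2 * p + 1), neg_abs_le (c - 2 * p + 1)]

theorem add_sub_two_le_minorRoot (hp : 0 ≤ p) (h : 3 * p ≤ c) :
    c + 3 * p - 2 ≤ minorRoot p c := by
  have : c + 4 * p - 1 ≤ √((c - 2 * p + 1) ^ 2 + 16 * c * p) := by
    refine (le_abs_self _).trans ?_
    rw [← Real.sqrt_sq_eq_abs]
    exact Real.sqrt_le_sqrt (by nlinarith)
  unfold minorRoot
  linarith

theorem minor_pos (hp : 0 ≤ p) (hc : 0 ≤ c) {t : ℝ} (ht : minorRoot p c < t) :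
    0 < minor p c t := by
  have := le_minorRoot hp hc
  rw [minor_eq_mul hp hc]
  exact mul_pos (by linarith) (by linarith)

theorem cubic_minorRoot_neg (hp : 0 < p) (hc : 0 < c) : cubic p c (minorRoot p c) < 0 := by
  have := le_minorRoot hp.le hc.le
  have h2 : 0 < c * p * (minorRoot p c + 2) := by apply mul_pos (mul_pos hc hp); linarith
  have h3 : 0 < p ^ 2 * (minorRoot p c + c + 1) := by apply mul_pos (pow_pos hp 2); linarith
  rw [cubic, minor_eq_mul hp.le hc.le, sub_self, zero_mul, mul_zero]
  linarith

theorem cubic_pos (hp : 0 ≤ p) (hc : 0 ≤ c) {t : ℝ} (ht : 3 * (p + c) ≤ t) :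
    0 < cubic p c t := by
  obtain ⟨u, hu, rfl⟩ : ∃ u, 0 ≤ u ∧ t = 3 * (p + c) + u :=
    ⟨t - 3 * (p + c), by linarith, by ring⟩
  unfold cubic minor
  ring_nf
  positivity

theorem exists_cubic_eq_zero_of_neg (hp : 0 ≤ p) (hc : 0 ≤ c) {L : ℝ} (hL : cubic p c L < 0) :
    ∃ r, L < r ∧ cubic p c r = 0 := by
  have hLB : L ≤ 3 * (p + c) := by
    by_contra! h
    exact (cubic_pos hp hc h.le).not_gt hL
  have hcont : ContinuousOn (cubic p c) (Set.Icc L (3 * (p + c))) := by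
    unfold cubic minor
    fun_prop
  obtain ⟨r, hr, hr0⟩ := intermediate_value_Ioo hLB hcont ⟨hL, cubic_pos hp hc le_rfl⟩
  exact ⟨r, hr.1, hr0⟩

/- The witness is the column of cofactors of the first row of `t - quotient p c`. -/
theorem exists_pos_eigenvector_of_cubic_eq_zero (hp : 0 < p) (hc : 0 ≤ c) {t : ℝ}
    (ht : minorRoot p c < t) (h : cubic p c t = 0) :
    ∃ v : Fin 3 → ℝ, (∀ i, 0 < v i) ∧ quotient p c *ᵥ v = t • v := by
  have := le_minorRoot hp.le hc
  refine ⟨![minor p c t, p * (t + 2), p * (t + c + 1)], ?_, ?_⟩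
  · intro i
    fin_cases i
    · exact minor_pos hp.le hc ht
    · exact mul_pos hp (by linarith)
    · exact mul_pos hp (by linarith)
  · rw [cubic, minor] at h
    ext i
    fin_cases i <;> simp [quotient, mulVec, dotProduct, Fin.sum_univ_three, minor] <;>
      [linear_combination -h; ring; ring]

end

theorem cubic_lt_cubic {d s N t : ℝ} (hd : 2 ≤ d) (hs : d < s) (hn : 2 * s + 1 ≤ N)
    (hN : 8 * d ≤ N) (ht : N + d - 2 ≤ t) :
    cubic s (N - 2 * s) t < cubic d (N - 2 * d) t := by
  set Q := -t - t ^ 2 - 2 * N - 2 * N * t + 5 * d + 5 * d * t + d * N - 2 * d ^ 2 + 5 * s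
    + 5 * s * t + s * N - 2 * s * d - 2 * s ^ 2
  have hdiff : cubic s (N - 2 * s) t - cubic d (N - 2 * d) t = (s - d) * Q := by
    unfold cubic minor
    ring
  -- `Q` is concave in `t` with its vertex left of `N + d - 2`, and negative there.
  have hQ : Q < 0 := by
    nlinarith [mul_nonneg (by linarith : (0 : ℝ) ≤ t - (N + d - 2))
        (by nlinarith : (0 : ℝ) ≤ t + (N + d - 2) - (5 * d + 5 * s - 2 * N - 1)),
      sq_nonneg (N - 2 * s - 1), sq_nonneg (N - 8 * d)]
  nlinarith

theorem distSpecRad_eq_of_cubic_eq_zero {p c : ℕ} (hp : 0 < p) {t : ℝ}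
    (ht : minorRoot p c < t) (h : cubic p c t = 0) : distSpecRad (cliqueJoin p c) = t := by
  have : Nonempty (Fin p) := ⟨⟨0, hp⟩⟩
  obtain ⟨v, hv, hQv⟩ := exists_pos_eigenvector_of_cubic_eq_zero (by exact_mod_cast hp)
    (Nat.cast_nonneg c) ht h
  refine distSpecRad_eq_of_pos_eigenvector (w := v ∘ part p c) (fun i => hv _) ?_
  rw [distMatrix_mulVec_comp_part hp, hQv]
  rfl

end CliqueJoin

open CliqueJoin

theorem stmt8 (δ s n : ℕ) (hδ : 2 ≤ δ) (hs : δ + 1 ≤ s) (hs2 : 2 * s + 1 ≤ n)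
    (hn : 8 * δ ≤ n) :
    distSpecRad (graphJoin (⊤ : SimpleGraph (Fin δ))
        (graphSum (⊤ : SimpleGraph (Fin (n - 2 * δ))) (⊥ : SimpleGraph (Fin δ))))
      < distSpecRad (graphJoin (⊤ : SimpleGraph (Fin s))
        (graphSum (⊤ : SimpleGraph (Fin (n - 2 * s))) (⊥ : SimpleGraph (Fin s)))) := by
  have hcδ : ((n - 2 * δ : ℕ) : ℝ) = n - 2 * δ := by
    push_cast [Nat.cast_sub (by omega : 2 * δ ≤ n)]; ring
  have hcs : ((n - 2 * s : ℕ) : ℝ) = n - 2 * s := by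
    push_cast [Nat.cast_sub (by omega : 2 * s ≤ n)]; ring
  have hδ' : (2 : ℝ) ≤ δ := by exact_mod_cast hδ
  have hs' : (δ : ℝ) < s := by exact_mod_cast hs
  have hs2' : 2 * (s : ℝ) + 1 ≤ n := by exact_mod_cast hs2
  have hn' : 8 * (δ : ℝ) ≤ n := by exact_mod_cast hn
  obtain ⟨t, ht, hδt⟩ := exists_cubic_eq_zero_of_neg (by positivity) (by positivity)
    (cubic_minorRoot_neg (p := δ) (c := (n - 2 * δ : ℕ)) (by linarith) (by rw [hcδ]; linarith))
  have htn : n + δ - 2 ≤ t := by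
    have := add_sub_two_le_minorRoot (p := δ) (c := (n - 2 * δ : ℕ)) (by positivity)
      (by rw [hcδ]; linarith)
    linarith
  have hst : cubic s (n - 2 * s : ℕ) t < 0 := by
    have := cubic_lt_cubic hδ' hs' hs2' hn' htn
    rwa [← hcδ, ← hcs, hδt] at this
  have hsL : cubic s (n - 2 * s : ℕ) (max (minorRoot s (n - 2 * s : ℕ)) t) < 0 := by
    rcases max_choice (minorRoot s (n - 2 * s : ℕ)) t with h | h <;> rw [h]
    · exact cubic_minorRoot_neg (by linarith) (by rw [hcs]; linarith)
    · exact hst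
  obtain ⟨r, hr, hsr⟩ := exists_cubic_eq_zero_of_neg (by positivity) (by positivity) hsL
  rw [distSpecRad_eq_of_cubic_eq_zero (by omega) ht hδt,
    distSpecRad_eq_of_cubic_eq_zero (by omega) ((le_max_left _ _).trans_lt hr) hsr]
  exact (le_max_right _ _).trans_lt hr
end

section
/- Let b be a positive integer and s ≥ 2 an integer, and let n be an integer with n ≥ 2/b + 9b/2 + 9/2 and s ≤ (n−1)/(1+b). Then λ₁(D(K₁ ∨ (K_{n−1−b} + bK₁))) < λ₁(D(K_s ∨ (K_{n−s−sb} + sbK₁))). -/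
open SimpleGraph Finset

/-!
Both graphs have diameter two, and their distance matrices map vectors that are constant on the
three parts (the `K_p`, the `K_m` and the isolated vertices) to vectors of the same kind.

For `K₁ ∨ (K_{n-1-b} + bK₁)` the positive vector with weights `1, 1, 2 - ε` on the three parts,
`ε = (4b + 3)/(n + 5b + 1)`, satisfies `D w ≤ c w` entrywise with `c = n - 1 + 3b - 2bε`, so every
eigenvalue is at most `c` (Collatz–Wielandt). For `K_s ∨ (K_{n-s-sb} + sbK₁)` the Rayleigh quotient
of the transmission vector `D 𝟙 = (n - 1, n - 1 + sb, 2n - s - 2)` exceeds `c`. After clearing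
denominators this is a polynomial inequality in `b - 1`, `s - 2` and `n - 1 - s(1 + b)`, all
nonnegative; subtracting a suitable nonnegative multiple of `2bn - 9b² - 9b - 4 ≥ 0` (the hypothesis
on `n`) leaves a polynomial with nonnegative coefficients and positive constant term.
-/

open Matrix

namespace Matrix

variable {V : Type*} [Fintype V]

theorem le_of_mulVec_eq_smul_of_mulVec_le {M : Matrix V V ℝ} (hM : ∀ i j, 0 ≤ M i j)
    {w : V → ℝ} (hw : ∀ i, 0 < w i) {c : ℝ} (h : ∀ i, (M *ᵥ w) i ≤ c * w i)
    {μ : ℝ} {v : V → ℝ} (hv : v ≠ 0) (hμ : M *ᵥ v = μ • v) : μ ≤ c := by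
  obtain ⟨j, hj⟩ := Function.ne_iff.mp hv
  obtain ⟨i, -, hi⟩ := Finset.univ.exists_max_image (fun k => |v k| / w k) ⟨j, mem_univ j⟩
  set r := |v i| / w i
  have hbound : ∀ k, |v k| ≤ r * w k := fun k => (div_le_iff₀ (hw k)).mp (hi k (mem_univ k))
  have hri : r * w i = |v i| := div_mul_cancel₀ _ (hw i).ne'
  have hr : 0 < r := (div_pos (abs_pos.mpr hj) (hw j)).trans_le (hi j (mem_univ j))
  have hvi : 0 < |v i| := hri ▸ mul_pos hr (hw i)
  have key : |μ| * |v i| ≤ c * |v i| :=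
    calc |μ| * |v i| = |∑ k, M i k * v k| := by
          rw [← abs_mul, ← smul_eq_mul, ← Pi.smul_apply, ← hμ]; rfl
      _ ≤ ∑ k, M i k * |v k| := by
          refine (abs_sum_le_sum_abs _ _).trans_eq (sum_congr rfl fun k _ => ?_)
          rw [abs_mul, abs_of_nonneg (hM i k)]
      _ ≤ ∑ k, M i k * (r * w k) :=
          sum_le_sum fun k _ => mul_le_mul_of_nonneg_left (hbound k) (hM i k)
      _ = r * (M *ᵥ w) i := by simp only [mulVec, dotProduct, mul_sum, mul_left_comm]
      _ ≤ r * (c * w i) := mul_le_mul_of_nonneg_left (h i) hr.le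
      _ = c * |v i| := by rw [mul_left_comm, hri]
  exact (le_abs_self μ).trans (le_of_mul_le_mul_right key hvi)

theorem IsHermitian.exists_eigenvalue_dotProduct_mulVec_le [Nonempty V] {M : Matrix V V ℝ}
    (hM : M.IsHermitian) (u : V → ℝ) :
    ∃ μ, (∃ v, v ≠ 0 ∧ M *ᵥ v = μ • v) ∧ u ⬝ᵥ M *ᵥ u ≤ μ * (u ⬝ᵥ u) := by
  classical
  set T := toEuclideanLin M
  have hT : T.IsSymmetric := isSymmetric_toEuclideanLin_iff.mpr hM
  obtain ⟨v, hv⟩ := hT.hasEigenvalue_iSup_of_finiteDimensional.exists_hasEigenvector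
  refine ⟨_, ⟨WithLp.ofLp v, by simpa using hv.2, congrArg WithLp.ofLp hv.apply_eq_smul⟩, ?_⟩
  rcases eq_or_ne u 0 with rfl | hu
  · simp
  set U := WithLp.toLp 2 u
  have hU : U ≠ 0 := by simpa [U] using hu
  have hbdd : BddAbove (Set.range fun x : {x : EuclideanSpace ℝ V // x ≠ 0} =>
      RCLike.re (inner ℝ (T x) x) / ‖(x : EuclideanSpace ℝ V)‖ ^ 2) :=
    ⟨‖LinearMap.toContinuousLinearMap T‖, by
      rintro _ ⟨x, rfl⟩
      exact (le_abs_self _).trans ((LinearMap.toContinuousLinearMap T).rayleighQuotient_le_norm x)⟩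
  have hquad : RCLike.re (inner ℝ (T U) U) = u ⬝ᵥ M *ᵥ u := by
    simp [T, U, EuclideanSpace.inner_eq_star_dotProduct]
  have hnorm : ‖U‖ ^ 2 = u ⬝ᵥ u := by
    rw [← real_inner_self_eq_norm_sq, EuclideanSpace.inner_eq_star_dotProduct, star_trivial]
  have hle := le_ciSup hbdd ⟨U, hU⟩
  dsimp only at hle
  rwa [div_le_iff₀ (by positivity), hquad, hnorm] at hle

end Matrix

theorem Fintype.sum_ite_eq_zero_const {ι R : Type*} [Fintype ι] [DecidableEq ι] [Ring R] (z : ι)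
    (c : R) : ∑ t, (if z = t then 0 else c) = (Fintype.card ι - 1 : R) * c := by
  simp [Finset.sum_ite, Finset.filter_ne, Finset.card_erase_of_mem, sub_mul,
    Nat.cast_pred (Fintype.card_pos_iff.mpr ⟨z⟩)]

namespace SimpleGraph

variable {V : Type*} {G : SimpleGraph V}

theorem dist_eq_two_of_adj_of_adj {u v w : V} (huv : u ≠ v) (h : ¬ G.Adj u v)
    (huw : G.Adj u w) (hwv : G.Adj w v) : G.dist u v = 2 := by
  rw [dist, edist_eq_two_iff.mpr ⟨huv, h, w, huw, hwv.symm⟩]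
  rfl

theorem dist_eq_ite_of_exists_adj_adj [DecidableEq V] [DecidableRel G.Adj]
    (h : ∀ u v, u ≠ v → ¬ G.Adj u v → ∃ w, G.Adj u w ∧ G.Adj w v) (u v : V) :
    G.dist u v = if u = v then 0 else if G.Adj u v then 1 else 2 := by
  split_ifs with huv hadj
  · rw [huv, dist_self]
  · exact dist_eq_one_iff_adj.mpr hadj
  · obtain ⟨w, huw, hwv⟩ := h u v huv hadj
    exact dist_eq_two_of_adj_of_adj huv hadj huw hwv

end SimpleGraph

section DistSpecRad

variable {V : Type*} [Fintype V] (G : SimpleGraph V)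

theorem isHermitian_distMatrix : (distMatrix G).IsHermitian := by
  ext i j
  simp [distMatrix, SimpleGraph.dist_comm]

theorem distMatrix_nonneg (i j : V) : 0 ≤ distMatrix G i j := Nat.cast_nonneg _

theorem distSpecRad_le_of_mulVec_le {w : V → ℝ} (hw : ∀ i, 0 < w i) {c : ℝ} (hc : 0 ≤ c)
    (h : ∀ i, (distMatrix G *ᵥ w) i ≤ c * w i) : distSpecRad G ≤ c :=
  Real.sSup_le (fun _ ⟨_, hv, hμ⟩ =>
    le_of_mulVec_eq_smul_of_mulVec_le (distMatrix_nonneg G) hw h hv hμ) hc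

theorem le_distSpecRad {μ : ℝ} (hμ : ∃ v, v ≠ 0 ∧ distMatrix G *ᵥ v = μ • v) :
    μ ≤ distSpecRad G := by
  refine le_csSup ⟨∑ i, ∑ j, distMatrix G i j, fun _ ⟨_, hv, hν⟩ =>
    le_of_mulVec_eq_smul_of_mulVec_le (distMatrix_nonneg G) (w := 1) (fun _ => one_pos)
      (fun i => ?_) hv hν⟩ hμ
  simpa [mulVec, dotProduct] using
    single_le_sum (fun k _ => sum_nonneg fun j _ => distMatrix_nonneg G k j) (mem_univ i)

theorem lt_distSpecRad_of_mul_dotProduct_lt (u : V → ℝ) {c : ℝ}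
    (h : c * (u ⬝ᵥ u) < u ⬝ᵥ distMatrix G *ᵥ u) : c < distSpecRad G := by
  have : Nonempty V := by
    by_contra hV
    simp [not_nonempty_iff.mp hV, dotProduct] at h
  obtain ⟨μ, hμ, hle⟩ := (isHermitian_distMatrix G).exists_eigenvalue_dotProduct_mulVec_le u
  exact (lt_of_mul_lt_mul_right (h.trans_le hle)
    (sum_nonneg fun i _ => mul_self_nonneg (u i))).trans_le (le_distSpecRad G hμ)

end DistSpecRad

def cliqueJoinGraph (p m q : ℕ) : SimpleGraph (Fin p ⊕ (Fin m ⊕ Fin q)) :=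
  graphJoin ⊤ (graphSum ⊤ ⊥)

def classVec {p m q : ℕ} (α β γ : ℝ) : Fin p ⊕ (Fin m ⊕ Fin q) → ℝ :=
  Sum.elim (fun _ => α) (Sum.elim (fun _ => β) fun _ => γ)

section CliqueJoin

variable {p m q : ℕ}

theorem cliqueJoinGraph_exists_adj_adj (hp : 0 < p) (x y : Fin p ⊕ (Fin m ⊕ Fin q))
    (hxy : x ≠ y) (h : ¬ (cliqueJoinGraph p m q).Adj x y) :
    ∃ w, (cliqueJoinGraph p m q).Adj x w ∧ (cliqueJoinGraph p m q).Adj w y :=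
  ⟨.inl ⟨0, hp⟩, by
    rcases x with a | x <;> rcases y with b | y <;> simp_all [cliqueJoinGraph, graphJoin]⟩

theorem distMatrix_cliqueJoinGraph_mulVec_classVec (hp : 0 < p) (α β γ : ℝ) :
    distMatrix (cliqueJoinGraph p m q) *ᵥ classVec α β γ =
      classVec ((p - 1) * α + m * β + q * γ) (p * α + (m - 1) * β + 2 * q * γ)
        (p * α + 2 * m * β + 2 * (q - 1) * γ) := by
  classical
  funext x
  rcases x with a | k | j <;>
    simp only [mulVec, dotProduct, Fintype.sum_sum_type, distMatrix, classVec, Sum.elim_inl,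
      Sum.elim_inr,
      SimpleGraph.dist_eq_ite_of_exists_adj_adj (cliqueJoinGraph_exists_adj_adj hp)] <;>
    simp +contextual [cliqueJoinGraph, graphJoin, graphSum, Fintype.sum_ite_eq_zero_const] <;>
    ring

theorem classVec_dotProduct_classVec (α β γ α' β' γ' : ℝ) :
    (classVec α β γ : Fin p ⊕ (Fin m ⊕ Fin q) → ℝ) ⬝ᵥ classVec α' β' γ' =
      p * (α * α') + m * (β * β') + q * (γ * γ') := by
  simp [dotProduct, Fintype.sum_sum_type, classVec, add_assoc]

theorem distSpecRad_cliqueJoinGraph_one_le (m q : ℕ) :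
    distSpecRad (cliqueJoinGraph 1 m q) ≤ m + 2 * q * (2 - (4 * q + 3) / (m + 6 * q + 2)) := by
  set ε : ℝ := (4 * q + 3) / (m + 6 * q + 2)
  have hε : ε * (m + 6 * q + 2) = 4 * q + 3 := div_mul_cancel₀ _ (by positivity)
  have hε2 : ε < 2 := by rw [div_lt_iff₀ (by positivity)]; linarith
  refine distSpecRad_le_of_mulVec_le _ (w := classVec 1 1 (2 - ε)) ?_ (by nlinarith) ?_
  · rintro (_ | _ | _) <;> simp [classVec, hε2]
  · rw [distMatrix_cliqueJoinGraph_mulVec_classVec one_pos]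
    rintro (_ | _ | _) <;> simp only [classVec, Sum.elim_inl, Sum.elim_inr, Nat.cast_one]
    · nlinarith
    · linarith
    -- ε is chosen so that the slack in this row is exactly `2qε²`
    · nlinarith [sq_nonneg ε]

end CliqueJoin

theorem pos_of_sub_mul_pos {d e g : ℝ} (he : 0 ≤ e) (hg : 0 ≤ g) (h : 0 < d - e * g) :
    0 < d := by
  nlinarith [mul_nonneg he hg]

theorem cliqueJoin_rayleigh_gap (b s n : ℝ) (hb : 1 ≤ b) (hs : 2 ≤ s)
    (hn : 2 / b + 9 * b / 2 + 9 / 2 ≤ n) (hsn : s ≤ (n - 1) / (1 + b)) :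
    (n - 1 - b + 2 * b * (2 - (4 * b + 3) / (n + 5 * b + 1))) *
        (s * ((n - 1) * (n - 1)) + (n - s - s * b) * ((n - 1 + s * b) * (n - 1 + s * b)) +
          s * b * ((2 * n - s - 2) * (2 * n - s - 2))) <
      s * ((n - 1) * ((s - 1) * (n - 1) + (n - s - s * b) * (n - 1 + s * b) +
          s * b * (2 * n - s - 2))) +
        (n - s - s * b) * ((n - 1 + s * b) * (s * (n - 1) + (n - s - s * b - 1) * (n - 1 + s * b) +
          2 * (s * b) * (2 * n - s - 2))) +
        s * b * ((2 * n - s - 2) * (s * (n - 1) + 2 * (n - s - s * b) * (n - 1 + s * b) +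
          2 * (s * b - 1) * (2 * n - s - 2))) := by
  replace hn : 4 + 9 * b ^ 2 + 9 * b ≤ 2 * b * n := by
    have := mul_le_mul_of_nonneg_left hn (by positivity : 0 ≤ 2 * b)
    rwa [show 2 * b * (2 / b + 9 * b / 2 + 9 / 2) = 4 + 9 * b ^ 2 + 9 * b by
      field_simp; ring] at this
  replace hsn : s * (1 + b) ≤ n - 1 := (le_div_iff₀ (by positivity)).mp hsn
  have hK : 0 < n + 5 * b + 1 := by nlinarith
  have hc : (n - 1 - b + 2 * b * (2 - (4 * b + 3) / (n + 5 * b + 1))) * (n + 5 * b + 1) =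
      (n + 3 * b - 1) * (n + 5 * b + 1) - 2 * b * (4 * b + 3) := by
    linear_combination (-2 * b) * div_mul_cancel₀ (4 * b + 3) hK.ne'
  refine lt_of_mul_lt_mul_right ?_ hK.le
  rw [mul_right_comm, hc, ← sub_pos]
  obtain ⟨x, hx, rfl⟩ : ∃ x, 0 ≤ x ∧ b = x + 1 := ⟨b - 1, by linarith, by ring⟩
  obtain ⟨y, hy, rfl⟩ : ∃ y, 0 ≤ y ∧ s = y + 2 := ⟨s - 2, by linarith, by ring⟩
  obtain ⟨t, ht, rfl⟩ : ∃ t, 0 ≤ t ∧ n = t + 1 + (y + 2) * (x + 2) :=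
    ⟨n - 1 - (y + 2) * (x + 2), by linarith, by ring⟩
  refine pos_of_sub_mul_pos (sub_nonneg.mpr hn) (by positivity :
    0 ≤ 114 + 410 * x + 398 * x ^ 2 + 132 * y + 463 * x * y + 620 * x ^ 2 * y + 117 * x ^ 3) ?_
  ring_nf
  positivity

theorem stmt12 (b s n : ℕ) (hb : 1 ≤ b) (hs : 2 ≤ s)
    (hn : 2 / (b : ℝ) + 9 * (b : ℝ) / 2 + 9 / 2 ≤ (n : ℝ))
    (hsn : (s : ℝ) ≤ ((n : ℝ) - 1) / (1 + (b : ℝ))) :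
    distSpecRad (graphJoin (⊤ : SimpleGraph (Fin 1))
        (graphSum (⊤ : SimpleGraph (Fin (n - 1 - b))) (⊥ : SimpleGraph (Fin b))))
      < distSpecRad (graphJoin (⊤ : SimpleGraph (Fin s))
        (graphSum (⊤ : SimpleGraph (Fin (n - s - s * b))) (⊥ : SimpleGraph (Fin (s * b))))) := by
  have hbR : (1 : ℝ) ≤ b := by exact_mod_cast hb
  have hsR : (2 : ℝ) ≤ s := by exact_mod_cast hs
  have hsn' : s + s * b + 1 ≤ n := by
    have := (le_div_iff₀ (by positivity)).mp hsn
    exact_mod_cast (by linarith : (s : ℝ) + s * b + 1 ≤ n)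
  have hbn : b + 1 ≤ n := by
    have := Nat.le_mul_of_pos_left b (show 0 < s by omega)
    omega
  have hm₁ : ((n - 1 - b : ℕ) : ℝ) = n - 1 - b := by
    rw [Nat.cast_sub (by omega), Nat.cast_sub (by omega), Nat.cast_one]
  have hm₂ : ((n - s - s * b : ℕ) : ℝ) = n - s - s * b := by
    rw [Nat.cast_sub (by omega), Nat.cast_sub (by omega), Nat.cast_mul]
  calc distSpecRad (cliqueJoinGraph 1 (n - 1 - b) b)
      ≤ n - 1 - b + 2 * b * (2 - (4 * b + 3) / (n + 5 * b + 1)) :=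
        (distSpecRad_cliqueJoinGraph_one_le _ _).trans_eq (by rw [hm₁]; ring)
    _ < distSpecRad (cliqueJoinGraph s (n - s - s * b) (s * b)) := by
        apply lt_distSpecRad_of_mul_dotProduct_lt _
          (classVec (n - 1) (n - 1 + s * b) (2 * n - s - 2))
        rw [distMatrix_cliqueJoinGraph_mulVec_classVec (by omega), classVec_dotProduct_classVec,
          classVec_dotProduct_classVec, hm₂, Nat.cast_mul]
        exact cliqueJoin_rayleigh_gap b s n hbR hsR hn hsn
end
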